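/- arXiv:2411.03241 — 5 statements merged into one kernel-verified Lean document; each statement's English description precedes it below -/
import Mathlib

section
/- For x ∈ (0, 1/2), if the sender sets α_x = κ_x(s*(x))/(1 + κ_x(s*(x))) and troll density g(s) = ((1−α_x)/α_x)·κ_x'(s) for s < s*(x) and g(s) = 0 for s ≥ s*(x), then g is a probability density (integrates to 1 over ℝ) and the induced posterior π(s) equals exactly x for all s < s*(x). -/
open MeasureTheory Set Filter Topology

/-! Below `s*` the likelihood ratio is under `x / (1 - x)`, i.e.
`κ' = (x f₀ - (1 - x) f₁) / (1 - 2x)` is positive there; since `κ → 0` at `-∞`, this gives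
`κ(s*) > 0`, hence `α ∈ (0, 1)` and `(1 - α) / α = 1 / κ(s*)`. A nonnegative derivative of a
function with a limit at `-∞` is integrable, so the mass of `g` is `κ(s*) / κ(s*) = 1`. Below `s*`
we have `α g = (1 - α) κ'`, and adding `κ'` to the numerator and `2κ'` to the denominator of
`f₁ / (f₀ + f₁)` gives exactly `x`. -/

theorem integrableOn_Iic_deriv_of_nonneg {g g' : ℝ → ℝ} {a l : ℝ}
    (hderiv : ∀ x ∈ Iic a, HasDerivAt g (g' x) x) (g'pos : ∀ x ∈ Iio a, 0 ≤ g' x)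
    (hg : Tendsto g atBot (𝓝 l)) : IntegrableOn g' (Iic a) := by
  have hderiv_neg : ∀ y ∈ Ici (-a), HasDerivAt (fun y => -g (-y)) (g' (-y)) y := fun y hy => by
    simpa [Function.comp_def, Pi.neg_def] using
      ((hderiv (-y) (mem_Iic.2 (neg_le.1 hy))).comp y (hasDerivAt_neg y)).neg
  have hlim : Tendsto (fun y => -g (-y)) atTop (𝓝 (-l)) :=
    (hg.comp tendsto_neg_atTop_atBot).neg
  have hint := (integrableOn_Ioi_deriv_of_nonneg' hderiv_neg
    (fun y hy => g'pos (-y) (mem_Iio.2 (neg_lt.1 hy))) hlim).comp_neg_Iio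
  simpa using (integrableOn_Iic_iff_integrableOn_Iio).2 hint

theorem integral_Iic_of_hasDerivAt_of_nonneg {g g' : ℝ → ℝ} {a l : ℝ}
    (hderiv : ∀ x ∈ Iic a, HasDerivAt g (g' x) x) (g'pos : ∀ x ∈ Iio a, 0 ≤ g' x)
    (hg : Tendsto g atBot (𝓝 l)) : ∫ x in Iic a, g' x = g a - l :=
  integral_Iic_of_hasDerivAt_of_tendsto' hderiv
    (integrableOn_Iic_deriv_of_nonneg hderiv g'pos hg) hg

theorem StrictMonoOn.lt_of_tendsto_atBot {α β : Type*} [LinearOrder α] [NoMinOrder α]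
    [LinearOrder β] [TopologicalSpace β] [ClosedIicTopology β] {g : α → β} {a : α} {l : β}
    (hg : StrictMonoOn g (Iic a)) (hlim : Tendsto g atBot (𝓝 l)) : l < g a := by
  obtain ⟨b, hb⟩ := exists_lt a
  have : Nonempty α := ⟨a⟩
  have hle : l ≤ g b := le_of_tendsto hlim <| by
    filter_upwards [Iic_mem_atBot b] with s hs
    exact hg.monotoneOn (mem_Iic.2 (hs.trans hb.le)) (mem_Iic.2 hb.le) hs
  exact hle.trans_lt (hg (mem_Iic.2 hb.le) self_mem_Iic hb)

theorem lt_of_hasDerivAt_pos_of_tendsto_atBot {g g' : ℝ → ℝ} {a l : ℝ}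
    (hderiv : ∀ x ∈ Iic a, HasDerivAt g (g' x) x) (g'pos : ∀ x ∈ Iio a, 0 < g' x)
    (hg : Tendsto g atBot (𝓝 l)) : l < g a := by
  refine StrictMonoOn.lt_of_tendsto_atBot ?_ hg
  refine strictMonoOn_of_deriv_pos (convex_Iic a)
    (fun x hx => (hderiv x hx).continuousAt.continuousWithinAt) fun x hx => ?_
  rw [interior_Iic] at hx
  rw [(hderiv x (Iio_subset_Iic_self hx)).deriv]
  exact g'pos x hx

theorem integral_ite_Iio_of_hasDerivAt_of_nonneg {g g' : ℝ → ℝ} {a l : ℝ} (c : ℝ)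
    (hderiv : ∀ x ∈ Iic a, HasDerivAt g (g' x) x) (g'pos : ∀ x ∈ Iio a, 0 ≤ g' x)
    (hg : Tendsto g atBot (𝓝 l)) :
    ∫ x, (if x < a then c * g' x else 0) = c * (g a - l) := by
  rw [← integral_Iic_of_hasDerivAt_of_nonneg hderiv g'pos hg, ← integral_const_mul,
    integral_Iic_eq_integral_Iio, ← integral_indicator measurableSet_Iio]
  rfl

theorem one_sub_mul_lt_mul_of_lt {f0 f1 : ℝ → ℝ} {x t s : ℝ} (hf0 : ∀ s, 0 < f0 s)
    (hm : StrictMono fun s => f1 s / f0 s) (hx : x < 1) (ht : f1 t / f0 t = x / (1 - x))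
    (hs : s < t) : (1 - x) * f1 s < x * f0 s := by
  have h : f1 s / f0 s < x / (1 - x) := ht ▸ hm hs
  rw [div_lt_div_iff₀ (hf0 s) (by linarith)] at h
  linarith

theorem posterior_eq_of_mul_eq {α g p0 p1 x : ℝ} (hα : α ≠ 1) (hx : 1 - 2 * x ≠ 0)
    (hp : p1 ≠ p0) (hg : α * g = (1 - α) * ((x * p0 - (1 - x) * p1) / (1 - 2 * x))) :
    ((1 - α) * p1 + α * g) / ((1 - α) * (p1 + p0) + 2 * (α * g)) = x := by
  have hk := div_mul_cancel₀ (x * p0 - (1 - x) * p1) hx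
  have hden : ((1 - α) * (p1 + p0) + 2 * (α * g)) * (1 - 2 * x) = (1 - α) * (p0 - p1) := by
    rw [hg]
    linear_combination (2 * (1 - α)) * hk
  have hnum : (1 - α) * p1 + α * g = x * ((1 - α) * (p1 + p0) + 2 * (α * g)) := by
    rw [hg]
    linear_combination (1 - α) * hk
  have hden_ne : (1 - α) * (p1 + p0) + 2 * (α * g) ≠ 0 := by
    refine left_ne_zero_of_mul (b := 1 - 2 * x) ?_
    rw [hden]
    exact mul_ne_zero (sub_ne_zero.2 hα.symm) (sub_ne_zero.2 hp.symm)
  rw [hnum, mul_div_cancel_right₀ x hden_ne]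

theorem stmt_5_general (f0 f1 F0 F1 : ℝ → ℝ)
    (hf0 : ∀ s, 0 < f0 s)
    (hF0 : ∀ s, HasDerivAt F0 (f0 s) s) (hF1 : ∀ s, HasDerivAt F1 (f1 s) s)
    (hF0bot : Filter.Tendsto F0 Filter.atBot (nhds 0))
    (hF1bot : Filter.Tendsto F1 Filter.atBot (nhds 0))
    (hm : StrictMono fun s => f1 s / f0 s)
    (x : ℝ) (hx : x ∈ Set.Ioo (0 : ℝ) (1 / 2))
    (sstar : ℝ) (hstar : f1 sstar / f0 sstar = x / (1 - x))
    (κ : ℝ → ℝ) (hκ : ∀ s, κ s = (x * F0 s - (1 - x) * F1 s) / (1 - 2 * x))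
    (α : ℝ) (hα : α = κ sstar / (1 + κ sstar))
    (g : ℝ → ℝ)
    (hg : ∀ s, g s = if s < sstar then
        ((1 - α) / α) * ((x * f0 s - (1 - x) * f1 s) / (1 - 2 * x)) else 0) :
    (∫ s, g s = 1) ∧
      ∀ s < sstar,
        ((1 - α) * f1 s + α * g s) /
          ((1 - α) * (f1 s + f0 s) + 2 * (α * g s)) = x := by
  obtain ⟨hx0, hx2⟩ := hx
  have h2x : 0 < 1 - 2 * x := by linarith
  set κ' : ℝ → ℝ := fun s => (x * f0 s - (1 - x) * f1 s) / (1 - 2 * x)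
  have hκ_deriv : ∀ s, HasDerivAt κ (κ' s) s := fun s => by
    rw [funext hκ]
    exact (((hF0 s).const_mul x).sub ((hF1 s).const_mul (1 - x))).div_const _
  have hκ_bot : Tendsto κ atBot (𝓝 0) := by
    rw [funext hκ]
    simpa using ((hF0bot.const_mul x).sub (hF1bot.const_mul (1 - x))).div_const (1 - 2 * x)
  have hlr : ∀ s < sstar, (1 - x) * f1 s < x * f0 s := fun s hs =>
    one_sub_mul_lt_mul_of_lt hf0 hm (by linarith) hstar hs
  have hκ'_pos : ∀ s < sstar, 0 < κ' s := fun s hs =>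
    div_pos (by linarith [hlr s hs]) h2x
  have hκ_star : 0 < κ sstar :=
    lt_of_hasDerivAt_pos_of_tendsto_atBot (fun s _ => hκ_deriv s) hκ'_pos hκ_bot
  have hα0 : 0 < α := by
    rw [hα]
    positivity
  have hα1 : α < 1 := by
    rw [hα, div_lt_one (by positivity)]
    linarith
  constructor
  · rw [integral_congr_ae (ae_of_all _ hg), integral_ite_Iio_of_hasDerivAt_of_nonneg _
      (fun s _ => hκ_deriv s) (fun s hs => (hκ'_pos s hs).le) hκ_bot, hα]
    field_simp
    ring
  · intro s hs
    have hf : f1 s < f0 s := by nlinarith [hlr s hs, hf0 s]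
    refine posterior_eq_of_mul_eq hα1.ne h2x.ne' hf.ne ?_
    rw [hg, if_pos hs]
    field_simp

/-- for `x ∈ (0,1/2)`, the sender's optimal troll density `g`
(supported below `s*(x)`, with mass `α_x = κ_x(s*(x))/(1+κ_x(s*(x)))`)
is a probability density and induces posterior exactly `x` below `s*(x)`. -/
theorem stmt_5 (f0 f1 F0 F1 : ℝ → ℝ)
    (hf0 : ∀ s, 0 < f0 s) (hf1 : ∀ s, 0 < f1 s)
    (hF0 : ∀ s, HasDerivAt F0 (f0 s) s) (hF1 : ∀ s, HasDerivAt F1 (f1 s) s)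
    (hF0bot : Filter.Tendsto F0 Filter.atBot (nhds 0))
    (hF1bot : Filter.Tendsto F1 Filter.atBot (nhds 0))
    (hm : StrictMono fun s => f1 s / f0 s)
    (x : ℝ) (hx : x ∈ Set.Ioo (0 : ℝ) (1 / 2))
    (sstar : ℝ) (hstar : f1 sstar / f0 sstar = x / (1 - x))
    (κ : ℝ → ℝ) (hκ : ∀ s, κ s = (x * F0 s - (1 - x) * F1 s) / (1 - 2 * x))
    (α : ℝ) (hα : α = κ sstar / (1 + κ sstar))
    (g : ℝ → ℝ)
    (hg : ∀ s, g s = if s < sstar then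
        ((1 - α) / α) * ((x * f0 s - (1 - x) * f1 s) / (1 - 2 * x)) else 0)
    (hgint : Integrable g) :
    (∫ s, g s = 1) ∧
      ∀ s < sstar,
        ((1 - α) * f1 s + α * g s) /
          ((1 - α) * (f1 s + f0 s) + 2 * (α * g s)) = x :=
  stmt_5_general f0 f1 F0 F1 hf0 hF0 hF1 hF0bot hF1bot hm x hx sstar hstar κ hκ α hα g hg
end

section
/- For x ∈ (1/2, 1), under the sender's optimal strategy the ex-ante probability that a voter of type x votes for the government in state θ equals [x·F0(s*(x)) − (1−x)·F1(s*(x)) − (2x−1)·F_θ(s*(x))] / [x·F0(s*(x)) − (1−x)·F1(s*(x))]; in state 0 this simplifies to (1−x)·(F0(s*(x)) − F1(s*(x)))/[x·F0(s*(x)) − (1−x)·F1(s*(x))], and in state 1 to x·(F0(s*(x)) − F1(s*(x)))/[x·F0(s*(x)) − (1−x)·F1(s*(x))]. -/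
open MeasureTheory Set

/-- for `x ∈ (1/2,1)`, under the sender's optimal strategy the
probability that a type-`x` voter votes for the government equals
`(1−x)(F0(s*)−F1(s*))/D` in state 0 and `x(F0(s*)−F1(s*))/D` in state 1,
where `D = x F0(s*) − (1−x) F1(s*)`. -/
theorem stmt_6 (f0 f1 F0 F1 : ℝ → ℝ)
    (hf0 : ∀ s, 0 < f0 s) (hf1 : ∀ s, 0 < f1 s)
    (hF0 : ∀ s, HasDerivAt F0 (f0 s) s) (hF1 : ∀ s, HasDerivAt F1 (f1 s) s)
    (hF0top : Filter.Tendsto F0 Filter.atTop (nhds 1))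
    (hF1top : Filter.Tendsto F1 Filter.atTop (nhds 1))
    (hf0int : Integrable f0) (hf1int : Integrable f1)
    (hm : StrictMono fun s => f1 s / f0 s)
    (x : ℝ) (hx : x ∈ Set.Ioo (1 / 2 : ℝ) 1)
    (sstar : ℝ) (hstar : f1 sstar / f0 sstar = x / (1 - x))
    (α : ℝ) (hα0 : 0 < α) (hα1 : α < 1)
    (g : ℝ → ℝ)
    (hg : ∀ s, g s = if sstar ≤ s then
        ((1 - α) / α) * (((1 - x) * f1 s - x * f0 s) / (2 * x - 1)) else 0)
    (hgnorm : ∫ s in Ici sstar, g s = 1) :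
    (∫ s in Ici sstar, ((1 - α) * f0 s + α * g s)) =
        (x * F0 sstar - (1 - x) * F1 sstar - (2 * x - 1) * F0 sstar) /
          (x * F0 sstar - (1 - x) * F1 sstar) ∧
    (∫ s in Ici sstar, ((1 - α) * f1 s + α * g s)) =
        (x * F0 sstar - (1 - x) * F1 sstar - (2 * x - 1) * F1 sstar) /
          (x * F0 sstar - (1 - x) * F1 sstar) ∧
    (∫ s in Ici sstar, ((1 - α) * f0 s + α * g s)) =
        (1 - x) * (F0 sstar - F1 sstar) /
          (x * F0 sstar - (1 - x) * F1 sstar) ∧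
    (∫ s in Ici sstar, ((1 - α) * f1 s + α * g s)) =
        x * (F0 sstar - F1 sstar) /
          (x * F0 sstar - (1 - x) * F1 sstar) := by
  obtain ⟨hx1, hx2⟩ := hx
  have hK : (0:ℝ) < 2 * x - 1 := by linarith
  have hI0 : ∫ s in Ici sstar, f0 s = 1 - F0 sstar := by
    rw [integral_Ici_eq_integral_Ioi]
    exact integral_Ioi_of_hasDerivAt_of_tendsto' (fun s _ => hF0 s)
      hf0int.integrableOn hF0top
  have hI1 : ∫ s in Ici sstar, f1 s = 1 - F1 sstar := by
    rw [integral_Ici_eq_integral_Ioi]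
    exact integral_Ioi_of_hasDerivAt_of_tendsto' (fun s _ => hF1 s)
      hf1int.integrableOn hF1top
  have hint0 : IntegrableOn f0 (Ici sstar) := hf0int.integrableOn
  have hint1 : IntegrableOn f1 (Ici sstar) := hf1int.integrableOn
  have hgIci : ∀ s ∈ Ici sstar,
      g s = (((1 - α) / α) / (2 * x - 1)) * ((1 - x) * f1 s - x * f0 s) := by
    intro s hs
    rw [hg s, if_pos (mem_Ici.mp hs)]
    ring
  have hsubint : IntegrableOn (fun s => (1 - x) * f1 s - x * f0 s) (Ici sstar) :=
    (hint1.const_mul _).sub (hint0.const_mul _)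
  have hgint : IntegrableOn g (Ici sstar) := by
    refine MeasureTheory.IntegrableOn.congr_fun
      (hsubint.const_mul (((1 - α) / α) / (2 * x - 1)))
      (fun s hs => (hgIci s hs).symm) measurableSet_Ici
  -- value of ∫ g
  have hIg : ∫ s in Ici sstar, g s =
      (((1 - α) / α) / (2 * x - 1)) * ((1 - x) * (1 - F1 sstar) - x * (1 - F0 sstar)) := by
    rw [setIntegral_congr_fun measurableSet_Ici hgIci, integral_const_mul,
      integral_sub (hint1.const_mul _) (hint0.const_mul _),
      integral_const_mul, integral_const_mul, hI0, hI1]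
  have hαne : α ≠ 0 := ne_of_gt hα0
  have hKne : (2 * x - 1) ≠ 0 := ne_of_gt hK
  have hD : (1 - α) * (x * F0 sstar - (1 - x) * F1 sstar) = 2 * x - 1 := by
    have h := hIg.symm.trans hgnorm
    field_simp at h
    linarith
  have hDpos : 0 < x * F0 sstar - (1 - x) * F1 sstar := by
    nlinarith
  have hDne : x * F0 sstar - (1 - x) * F1 sstar ≠ 0 := ne_of_gt hDpos
  have hmain0 : (∫ s in Ici sstar, ((1 - α) * f0 s + α * g s)) =
      (1 - α) * (1 - F0 sstar) + α := by
    rw [integral_add (hint0.const_mul _) (hgint.const_mul _),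
      integral_const_mul, integral_const_mul, hI0, hgnorm, mul_one]
  have hmain1 : (∫ s in Ici sstar, ((1 - α) * f1 s + α * g s)) =
      (1 - α) * (1 - F1 sstar) + α := by
    rw [integral_add (hint1.const_mul _) (hgint.const_mul _),
      integral_const_mul, integral_const_mul, hI1, hgnorm, mul_one]
  refine ⟨?_, ?_, ?_, ?_⟩
  · rw [hmain0, eq_div_iff hDne]
    linear_combination (-(F0 sstar)) * hD
  · rw [hmain1, eq_div_iff hDne]
    linear_combination (-(F1 sstar)) * hD
  · rw [hmain0, eq_div_iff hDne]
    linear_combination (-(F0 sstar)) * hD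
  · rw [hmain1, eq_div_iff hDne]
    linear_combination (-(F1 sstar)) * hD
end

section
/- Polarisation can restore information aggregation: suppose H is a continuous CDF with H(1/2) < 1/2 and suppose V0(H) ≥ 1/2 where V0(H) = H(1/2) + ∫_{1/2}^{1} φ(x) dH(x) for a fixed continuous function φ : [1/2, 1] → [0, 1]. Define the family H_r(x) = H((1−r)x + r/2) for r ∈ [0, 1). Then V0(H_r) is continuous in r, V0(H_r) → H(1/2) < 1/2 as r → 1, and hence there exists r ∈ (0,1) with V0(H_r) < 1/2 while V1(H_r) > V0(H_r); moreover each H_r with r > 0 admits greater polarisation than H, i.e. H_r(x) ≥ H(x) for x ≤ 1/2 and H_r(x) ≤ H(x) for x ≥ 1/2. -/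
/-!
Substituting `u = (1 - r) x + r / 2` turns `V(H_r) - H(1/2)` into the integral of
`φ((u - r/2)/(1 - r))` against the fixed, possibly discontinuous, density `h` over `[1/2, 1 - r/2]`;
with the moving endpoint written as an indicator, dominated convergence gives continuity in `r`. Since `0 ≤ φ ≤ 1`, `V(H_r)` is squeezed between `H(1/2)`
and `H(1 - r/2)`, so it tends to `H(1/2) < 1/2` as `r → 1`, and for `r` close to `1` it drops below
`1/2`. The comparison `V0 < V1` holds pointwise under the integral, and the polarisation inequalities
say only that `x ↦ (1 - r) x + r / 2` moves every point towards `1/2`.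
-/

open Set Filter intervalIntegral
open MeasureTheory Topology
open scoped Interval

/-- `voteShare H h φ r` is `H(1/2) + ∫_{1/2}^1 φ dH_r` for `H_r x = H ((1 - r) x + r / 2)`. -/
noncomputable def voteShare (H h φ : ℝ → ℝ) (r : ℝ) : ℝ :=
  H (1 / 2) + ∫ x in (1 / 2 : ℝ)..1, φ x * ((1 - r) * h ((1 - r) * x + r / 2))

theorem integral_mul_mul_comp_mul_add (f h : ℝ → ℝ) {c : ℝ} (hc : c ≠ 0) (d a b : ℝ) :
    ∫ x in a..b, f x * (c * h (c * x + d)) =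
      ∫ u in c * a + d..c * b + d, f ((u - d) / c) * h u := by
  rw [← smul_integral_comp_mul_add, smul_eq_mul, ← intervalIntegral.integral_const_mul]
  refine integral_congr fun x _ => ?_
  have hx : (c * x + d - d) / c = x := by rw [add_sub_cancel_right, mul_div_cancel_left₀ x hc]
  simp only [hx]
  ring

theorem continuousAt_integral_indicator_Iic {X E : Type*} [TopologicalSpace X]
    [FirstCountableTopology X] [NormedAddCommGroup E] [NormedSpace ℝ E]
    {F : X → ℝ → E} {b : X → ℝ} {bound : ℝ → ℝ} {a₁ a₂ : ℝ} {x₀ : X}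
    (hF_meas : ∀ x, AEStronglyMeasurable (F x) (volume.restrict (Ι a₁ a₂)))
    (hF_le : ∀ x u, ‖F x u‖ ≤ bound u) (hbound : IntervalIntegrable bound volume a₁ a₂)
    (hF_cont : ∀ u, ContinuousAt (F · u) x₀) (hb : ContinuousAt b x₀) :
    ContinuousAt (fun x => ∫ u in a₁..a₂, {u | u ≤ b x}.indicator (F x) u) x₀ := by
  refine continuousAt_of_dominated_interval
    (.of_forall fun x => (hF_meas x).indicator measurableSet_Iic)
    (.of_forall fun x => ae_of_all _ fun u _ =>
      (norm_indicator_le_norm_self _ _).trans (hF_le x u)) hbound ?_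
  filter_upwards [Measure.ae_ne volume (b x₀)] with u hu _
  rcases hu.lt_or_gt with hlt | hgt
  · refine (hF_cont u).congr ?_
    filter_upwards [hb.eventually (Ioi_mem_nhds hlt)] with x hx
    exact (indicator_of_mem (show u ∈ {u | u ≤ b x} from hx.le) _).symm
  · refine (continuousAt_const (y := 0)).congr ?_
    filter_upwards [hb.eventually (Iio_mem_nhds hgt)] with x hx
    exact (indicator_of_notMem (show u ∉ {u | u ≤ b x} from not_le.2 hx) _).symm

section Rescaling

variable {H h : ℝ → ℝ}

theorem hasDerivAt_comp_mul_add (hH : ∀ x, HasDerivAt H (h x) x) (c d x : ℝ) :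
    HasDerivAt (fun x => H (c * x + d)) (c * h (c * x + d)) x := by
  have hlin : HasDerivAt (fun x => c * x + d) c x := by
    simpa using ((hasDerivAt_id x).const_mul c).add_const d
  rw [mul_comm]
  exact (hH (c * x + d)).comp x hlin

theorem intervalIntegrable_mul_comp_mul_add (hH : ∀ x, HasDerivAt H (h x) x)
    (hh : ∀ x, 0 ≤ h x) {c : ℝ} (hc : 0 ≤ c) (d a b : ℝ) : IntervalIntegrable (fun x => c * h (c * x + d)) volume a b :=
  intervalIntegrable_deriv_of_nonneg
    (fun x _ => (hasDerivAt_comp_mul_add hH c d x).continuousAt.continuousWithinAt)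
    (fun x _ => hasDerivAt_comp_mul_add hH c d x) fun _ _ => mul_nonneg hc (hh _)

theorem integral_mul_comp_mul_add (hH : ∀ x, HasDerivAt H (h x) x) (hh : ∀ x, 0 ≤ h x)
    {c : ℝ} (hc : 0 ≤ c) (d a b : ℝ) :
    ∫ x in a..b, c * h (c * x + d) = H (c * b + d) - H (c * a + d) :=
  integral_eq_sub_of_hasDerivAt (fun x _ => hasDerivAt_comp_mul_add hH c d x)
    (intervalIntegrable_mul_comp_mul_add hH hh hc d a b)

end Rescaling

section VoteShare

variable {H h φ : ℝ → ℝ}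

theorem intervalIntegrable_voteShare_integrand (hH : ∀ x, HasDerivAt H (h x) x)
    (hh : ∀ x, 0 ≤ h x) (hφc : ContinuousOn φ (Icc (1 / 2) 1)) {r : ℝ} (hr : r ≤ 1) :
    IntervalIntegrable (fun x => φ x * ((1 - r) * h ((1 - r) * x + r / 2))) volume (1 / 2) 1 :=
  (intervalIntegrable_mul_comp_mul_add hH hh (sub_nonneg.2 hr) _ _ _).continuousOn_mul
    (by rwa [uIcc_of_le (by norm_num)])

theorem voteShare_mem_Icc (hH : ∀ x, HasDerivAt H (h x) x) (hh : ∀ x, 0 ≤ h x)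
    (hφc : ContinuousOn φ (Icc (1 / 2) 1)) (hφ : ∀ x ∈ Icc (1 / 2 : ℝ) 1, φ x ∈ Icc 0 1)
    {r : ℝ} (hr : r ≤ 1) : voteShare H h φ r ∈ Icc (H (1 / 2)) (H (1 - r / 2)) := by
  have hweight : ∀ x, 0 ≤ (1 - r) * h ((1 - r) * x + r / 2) :=
    fun x => mul_nonneg (sub_nonneg.2 hr) (hh _)
  have hmass : ∫ x in (1 / 2 : ℝ)..1, (1 - r) * h ((1 - r) * x + r / 2)
      = H (1 - r / 2) - H (1 / 2) := by
    rw [integral_mul_comp_mul_add hH hh (sub_nonneg.2 hr)]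
    ring_nf
  have hle : ∫ x in (1 / 2 : ℝ)..1, φ x * ((1 - r) * h ((1 - r) * x + r / 2))
      ≤ ∫ x in (1 / 2 : ℝ)..1, (1 - r) * h ((1 - r) * x + r / 2) :=
    integral_mono_on (by norm_num) (intervalIntegrable_voteShare_integrand hH hh hφc hr)
      (intervalIntegrable_mul_comp_mul_add hH hh (sub_nonneg.2 hr) _ _ _)
      fun x hx => mul_le_of_le_one_left (hweight x) (hφ x hx).2
  have hnonneg : 0 ≤ ∫ x in (1 / 2 : ℝ)..1, φ x * ((1 - r) * h ((1 - r) * x + r / 2)) :=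
    integral_nonneg (by norm_num) fun x hx => mul_nonneg (hφ x hx).1 (hweight x)
  constructor <;> simp only [voteShare] <;> linarith

theorem tendsto_voteShare (hH : ∀ x, HasDerivAt H (h x) x) (hh : ∀ x, 0 ≤ h x)
    (hφc : ContinuousOn φ (Icc (1 / 2) 1)) (hφ : ∀ x ∈ Icc (1 / 2 : ℝ) 1, φ x ∈ Icc 0 1) :
    Tendsto (voteShare H h φ) (𝓝[<] 1) (𝓝 (H (1 / 2))) := by
  have hmid : Tendsto (fun r : ℝ => 1 - r / 2) (𝓝[<] 1) (𝓝 (1 / 2)) :=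
    (Continuous.tendsto' (by fun_prop) 1 (1 / 2) (by norm_num)).mono_left nhdsWithin_le_nhds
  have hbounds : ∀ᶠ r in 𝓝[<] 1, voteShare H h φ r ∈ Icc (H (1 / 2)) (H (1 - r / 2)) :=
    eventually_nhdsWithin_of_forall fun r hr => voteShare_mem_Icc hH hh hφc hφ (le_of_lt hr)
  exact tendsto_of_tendsto_of_tendsto_of_le_of_le' tendsto_const_nhds
    ((hH (1 / 2)).continuousAt.tendsto.comp hmid) (hbounds.mono fun _ hr => hr.1)
    (hbounds.mono fun _ hr => hr.2)

theorem voteShare_lt_voteShare {φ₀ φ₁ : ℝ → ℝ} (hH : ∀ x, HasDerivAt H (h x) x)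
    (hh : ∀ x, 0 < h x) (hφ₀c : ContinuousOn φ₀ (Icc (1 / 2) 1))
    (hφ₁c : ContinuousOn φ₁ (Icc (1 / 2) 1)) (hlt : ∀ x ∈ Ioo (1 / 2 : ℝ) 1, φ₀ x < φ₁ x)
    {r : ℝ} (hr : r < 1) : voteShare H h φ₀ r < voteShare H h φ₁ r := by
  have I₀ := intervalIntegrable_voteShare_integrand hH (fun x => (hh x).le) hφ₀c hr.le
  have I₁ := intervalIntegrable_voteShare_integrand hH (fun x => (hh x).le) hφ₁c hr.le
  have hpos := intervalIntegral_pos_of_pos_on (I₁.sub I₀) (fun x hx => by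
    rw [← sub_mul]
    exact mul_pos (sub_pos.2 (hlt x hx)) (mul_pos (sub_pos.2 hr) (hh _))) (by norm_num)
  rw [integral_sub I₁ I₀, sub_pos] at hpos
  simp only [voteShare]
  linarith

theorem voteShare_eq_integral_indicator {ψ : ℝ → ℝ} (hφψ : EqOn φ ψ (Icc (1 / 2) 1)) {r : ℝ}
    (hr : r ∈ Ico 0 1) : voteShare H h φ r = H (1 / 2) + ∫ u in (1 / 2 : ℝ)..1,
      {u | u ≤ 1 - r / 2}.indicator (fun u => ψ ((u - r / 2) / (1 - r)) * h u) u := by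
  rw [voteShare, integral_indicator ⟨by linarith [hr.2], by linarith [hr.1]⟩]
  congr 1
  calc ∫ x in (1 / 2 : ℝ)..1, φ x * ((1 - r) * h ((1 - r) * x + r / 2))
      = ∫ x in (1 / 2 : ℝ)..1, ψ x * ((1 - r) * h ((1 - r) * x + r / 2)) :=
        integral_congr fun x hx => by rw [hφψ (by rwa [uIcc_of_le (by norm_num)] at hx)]
    _ = ∫ u in (1 - r) * (1 / 2) + r / 2..(1 - r) * 1 + r / 2,
          ψ ((u - r / 2) / (1 - r)) * h u :=
        integral_mul_mul_comp_mul_add ψ h (sub_ne_zero.2 hr.2.ne') _ _ _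
    _ = _ := by ring_nf

theorem continuousOn_voteShare (hH : ∀ x, HasDerivAt H (h x) x) (hh : ∀ x, 0 ≤ h x)
    (hφc : ContinuousOn φ (Icc (1 / 2) 1)) (hφ : ∀ x ∈ Icc (1 / 2 : ℝ) 1, φ x ∈ Icc 0 1) :
    ContinuousOn (voteShare H h φ) (Ico 0 1) := by
  set ψ := IccExtend (by norm_num : (1 / 2 : ℝ) ≤ 1) ((Icc (1 / 2 : ℝ) 1).domRestrict φ)
  have hψc : Continuous ψ := (continuousOn_iff_continuous_domRestrict.1 hφc).Icc_extend'
  have hψ : ∀ x, ψ x ∈ Icc 0 1 := fun x => hφ _ (projIcc _ _ _ x).2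
  have hφψ : EqOn φ ψ (Icc (1 / 2) 1) := fun x hx => by
    simp only [ψ, IccExtend_of_mem _ _ hx, domRestrict_apply]
  have hhint : IntervalIntegrable h volume (1 / 2) 1 :=
    intervalIntegrable_deriv_of_nonneg (fun x _ => (hH x).continuousAt.continuousWithinAt)
      (fun x _ => hH x) fun x _ => hh x
  intro r₀ hr₀
  refine ContinuousAt.continuousWithinAt ?_ |>.congr
    (fun r hr => voteShare_eq_integral_indicator hφψ hr) (voteShare_eq_integral_indicator hφψ hr₀)
  refine continuousAt_const.add (continuousAt_integral_indicator_Iic (bound := h) ?_ ?_ hhint ?_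
    (by fun_prop))
  · exact fun r => ((hψc.comp (by fun_prop)).aestronglyMeasurable).mul
      (intervalIntegrable_iff.1 hhint).aestronglyMeasurable
  · intro r u
    rw [norm_mul, Real.norm_of_nonneg (hψ _).1, Real.norm_of_nonneg (hh u)]
    exact mul_le_of_le_one_left (hh u) (hψ _).2
  · intro u
    have hden : (1 : ℝ) - r₀ ≠ 0 := sub_ne_zero.2 hr₀.2.ne'
    exact (hψc.continuousAt.comp (by fun_prop (disch := exact hden))).mul continuousAt_const

end VoteShare

theorem Monotone.le_apply_contract_of_le_half {H : ℝ → ℝ} (hH : Monotone H) {r x : ℝ}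
    (hr : 0 ≤ r) (hx : x ≤ 1 / 2) : H x ≤ H ((1 - r) * x + r / 2) :=
  hH (by nlinarith)

theorem Monotone.apply_contract_le_of_half_le {H : ℝ → ℝ} (hH : Monotone H) {r x : ℝ}
    (hr : 0 ≤ r) (hx : 1 / 2 ≤ x) : H ((1 - r) * x + r / 2) ≤ H x :=
  hH (by nlinarith)

theorem stmt_11_general (H h φ0 φ1 : ℝ → ℝ)
    (hHmono : StrictMono H)
    (hHderiv : ∀ x, HasDerivAt H (h x) x) (hh : ∀ x, 0 < h x)
    (hφ0c : ContinuousOn φ0 (Set.Icc (1 / 2 : ℝ) 1))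
    (hφ1c : ContinuousOn φ1 (Set.Icc (1 / 2 : ℝ) 1))
    (hφ0mem : ∀ x ∈ Set.Icc (1 / 2 : ℝ) 1, φ0 x ∈ Set.Icc (0 : ℝ) 1)
    (hφlt : ∀ x ∈ Set.Ioo (1 / 2 : ℝ) 1, φ0 x < φ1 x)
    (hH12 : H (1 / 2) < 1 / 2)
    (V0 V1 : ℝ → ℝ)
    (hV0 : ∀ r, V0 r = H (1 / 2) + ∫ x in (1 / 2 : ℝ)..1,
        φ0 x * ((1 - r) * h ((1 - r) * x + r / 2)))
    (hV1 : ∀ r, V1 r = H (1 / 2) + ∫ x in (1 / 2 : ℝ)..1,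
        φ1 x * ((1 - r) * h ((1 - r) * x + r / 2))) :
    ContinuousOn V0 (Set.Ico (0 : ℝ) 1) ∧
    Tendsto V0 (nhdsWithin 1 (Set.Iio 1)) (nhds (H (1 / 2))) ∧
    (∃ r ∈ Set.Ioo (0 : ℝ) 1, V0 r < 1 / 2 ∧ V0 r < V1 r) ∧
    (∀ r ∈ Set.Ioo (0 : ℝ) 1,
      (∀ x ≤ (1 / 2 : ℝ), H x ≤ H ((1 - r) * x + r / 2)) ∧
      (∀ x, (1 / 2 : ℝ) ≤ x → H ((1 - r) * x + r / 2) ≤ H x)) := by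
  obtain rfl : V0 = voteShare H h φ0 := funext hV0
  obtain rfl : V1 = voteShare H h φ1 := funext hV1
  have hlim := tendsto_voteShare hHderiv (fun x => (hh x).le) hφ0c hφ0mem
  refine ⟨continuousOn_voteShare hHderiv (fun x => (hh x).le) hφ0c hφ0mem, hlim, ?_,
    fun r hr => ⟨fun _ => hHmono.monotone.le_apply_contract_of_le_half hr.1.le,
      fun _ => hHmono.monotone.apply_contract_le_of_half_le hr.1.le⟩⟩
  obtain ⟨r, hr, hr_lt⟩ :=
    (Filter.Eventually.and (Ioo_mem_nhdsLT zero_lt_one) (hlim.eventually_lt_const hH12)).exists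
  exact ⟨r, hr, hr_lt, voteShare_lt_voteShare hHderiv hh hφ0c hφ1c hφlt hr.2⟩

/-- polarisation can restore information aggregation.
With `H_r(x) = H((1−r)x + r/2)` and vote shares
`V_θ(r) = H(1/2) + ∫_{1/2}^1 φ_θ(x) (1−r) h((1−r)x + r/2) dx`,
if `H(1/2) < 1/2 ≤ V0(0)` then `V0` is continuous in `r`, tends to
`H(1/2) < 1/2` as `r → 1⁻`, there is an `r ∈ (0,1)` with `V0(r) < 1/2` and
`V0(r) < V1(r)`, and each `H_r` (for `r ∈ (0,1)`) admits greater
polarisation than `H`. -/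
theorem stmt_11 (H h φ0 φ1 : ℝ → ℝ)
    (hHc : Continuous H) (hHmono : StrictMono H)
    (hHderiv : ∀ x, HasDerivAt H (h x) x) (hh : ∀ x, 0 < h x)
    (hφ0c : ContinuousOn φ0 (Set.Icc (1 / 2 : ℝ) 1))
    (hφ1c : ContinuousOn φ1 (Set.Icc (1 / 2 : ℝ) 1))
    (hφ0mem : ∀ x ∈ Set.Icc (1 / 2 : ℝ) 1, φ0 x ∈ Set.Icc (0 : ℝ) 1)
    (hφlt : ∀ x ∈ Set.Ioo (1 / 2 : ℝ) 1, φ0 x < φ1 x)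
    (hH12 : H (1 / 2) < 1 / 2)
    (V0 V1 : ℝ → ℝ)
    (hV0 : ∀ r, V0 r = H (1 / 2) + ∫ x in (1 / 2 : ℝ)..1,
        φ0 x * ((1 - r) * h ((1 - r) * x + r / 2)))
    (hV1 : ∀ r, V1 r = H (1 / 2) + ∫ x in (1 / 2 : ℝ)..1,
        φ1 x * ((1 - r) * h ((1 - r) * x + r / 2)))
    (hV0init : 1 / 2 ≤ V0 0) :
    ContinuousOn V0 (Set.Ico (0 : ℝ) 1) ∧
    Tendsto V0 (nhdsWithin 1 (Set.Iio 1)) (nhds (H (1 / 2))) ∧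
    (∃ r ∈ Set.Ioo (0 : ℝ) 1, V0 r < 1 / 2 ∧ V0 r < V1 r) ∧
    (∀ r ∈ Set.Ioo (0 : ℝ) 1,
      (∀ x ≤ (1 / 2 : ℝ), H x ≤ H ((1 - r) * x + r / 2)) ∧
      (∀ x, (1 / 2 : ℝ) ≤ x → H ((1 - r) * x + r / 2) ≤ H x)) :=
  stmt_11_general H h φ0 φ1 hHmono hHderiv hh hφ0c hφ1c hφ0mem hφlt hH12 V0 V1 hV0 hV1
end

section
/- Existence and uniqueness of the constrained support threshold: for x ∈ (0,1/2) and 0 < ᾱ < α*_x = κ_x(s*(x))/(1+κ_x(s*(x))), there exists a unique ŝ(x) < s*(x) such that ∫_{ŝ(x)}^{s*(x)} ((1−ᾱ)/ᾱ)·κ_x'(t) dt = 1, where κ_x'(t) = [x·f0(t) − (1−x)·f1(t)]/(1−2x) > 0 on (−∞, s*(x)). -/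
open MeasureTheory Set Filter Topology

/-!
The left tail integral `φ(a) = ∫_a^{s*} κ_x'` is continuous and, because `κ_x' > 0` to the left
of `s*` (monotone likelihood ratio), strictly decreasing; it vanishes at `s*` and increases to
`κ_x(s*)` as `a → -∞`. The condition on `ŝ` is `φ(ŝ) = ᾱ / (1 - ᾱ)`, and `ᾱ < α*_x` says exactly
that `ᾱ / (1 - ᾱ) < κ_x(s*)`, so the intermediate value theorem gives `ŝ` and strict
monotonicity makes it unique.
-/

theorem uIcc_subset_Iic {α : Type*} [LinearOrder α] {u v b : α} (hu : u ≤ b) (hv : v ≤ b) :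
    uIcc u v ⊆ Iic b :=
  fun _ ht => ht.2.trans (max_le hu hv)

section TailIntegral

variable {g : ℝ → ℝ} {b : ℝ}

theorem strictAntiOn_intervalIntegral_of_pos (hpos : ∀ t < b, 0 < g t)
    (hint : IntegrableOn g (Iic b)) :
    StrictAntiOn (fun a => ∫ t in a..b, g t) (Iic b) := by
  intro a₁ _ a₂ (ha₂ : a₂ ≤ b) h
  have hii : ∀ {u v}, u ≤ b → v ≤ b → IntervalIntegrable g volume u v := fun hu hv =>
    (hint.mono_set (uIcc_subset_Iic hu hv)).intervalIntegrable
  have hsplit := intervalIntegral.integral_add_adjacent_intervals (hii (h.le.trans ha₂) ha₂)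
    (hii ha₂ le_rfl)
  have hmid : 0 < ∫ t in a₁..a₂, g t :=
    intervalIntegral.intervalIntegral_pos_of_pos_on (hii (h.le.trans ha₂) ha₂)
      (fun t ht => hpos t (ht.2.trans_le ha₂)) h
  change ∫ t in a₂..b, g t < ∫ t in a₁..b, g t
  linarith

theorem setIntegral_Iic_pos (hpos : ∀ t < b, 0 < g t) (hint : IntegrableOn g (Iic b)) :
    0 < ∫ t in Iic b, g t := by
  rw [integral_Iic_eq_integral_Iio]
  have hnonneg : 0 ≤ᵐ[volume.restrict (Iio b)] g :=
    (ae_restrict_iff' measurableSet_Iio).2 (Eventually.of_forall fun t ht => (hpos t ht).le)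
  rw [setIntegral_pos_iff_support_of_nonneg_ae hnonneg (hint.mono_set Iio_subset_Iic_self),
    inter_eq_right.2 fun t (ht : t ∈ Iio b) => Function.mem_support.2 (hpos t ht).ne',
    Real.volume_Iio]
  exact ENNReal.zero_lt_top

theorem existsUnique_intervalIntegral_eq (hpos : ∀ t < b, 0 < g t)
    (hint : IntegrableOn g (Iic b)) {c : ℝ} (hc₀ : 0 < c) (hc : c < ∫ t in Iic b, g t) :
    ∃! a, a < b ∧ ∫ t in a..b, g t = c := by
  obtain ⟨a₀, ha₀b, ha₀⟩ := ((eventually_le_atBot b).and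
    ((intervalIntegral_tendsto_integral_Iic b hint tendsto_id).eventually
      (eventually_gt_nhds hc))).exists
  have hcont : ContinuousOn (fun a => ∫ t in a..b, g t) (Icc a₀ b) := by
    rw [← uIcc_of_le ha₀b]
    exact intervalIntegral.continuousOn_primitive_interval_left
      (hint.mono_set (uIcc_subset_Iic ha₀b le_rfl))
  obtain ⟨a, ⟨-, hab⟩, ha⟩ := intermediate_value_Icc' ha₀b hcont
    ⟨by simpa using hc₀.le, ha₀.le⟩
  have hab : a < b := hab.lt_of_ne <| by
    rintro rfl
    exact hc₀.ne (intervalIntegral.integral_same.symm.trans ha)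
  refine ⟨a, ⟨hab, ha⟩, fun a' ⟨ha'b, ha'⟩ => ?_⟩
  exact (strictAntiOn_intervalIntegral_of_pos hpos hint).injOn ha'b.le hab.le (ha'.trans ha.symm)

end TailIntegral

theorem stmt_18_general (f0 f1 : ℝ → ℝ)
    (hf0 : ∀ s, 0 < f0 s)
    (hm : StrictMono fun s => f1 s / f0 s)
    (x : ℝ) (hx : x ∈ Set.Ioo (0 : ℝ) (1 / 2))
    (sstar : ℝ) (hstar : f1 sstar / f0 sstar = x / (1 - x))
    (hint : IntegrableOn (fun t => (x * f0 t - (1 - x) * f1 t) / (1 - 2 * x))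
      (Set.Iic sstar))
    (κs : ℝ) (hκs : κs = ∫ t in Set.Iic sstar,
      (x * f0 t - (1 - x) * f1 t) / (1 - 2 * x))
    (αstar ᾱ : ℝ) (hαstar : αstar = κs / (1 + κs))
    (hᾱ0 : 0 < ᾱ) (hᾱ : ᾱ < αstar) :
    ∃! sh : ℝ, sh < sstar ∧
      (∫ t in Set.Ioc sh sstar,
        ((1 - ᾱ) / ᾱ) * ((x * f0 t - (1 - x) * f1 t) / (1 - 2 * x))) = 1 := by
  obtain ⟨hx0, hx2⟩ := hx
  have hpos : ∀ t < sstar, 0 < (x * f0 t - (1 - x) * f1 t) / (1 - 2 * x) := by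
    intro t ht
    have hratio := hm ht
    simp only [hstar] at hratio
    rw [div_lt_div_iff₀ (hf0 t) (by linarith)] at hratio
    exact div_pos (by linarith) (by linarith)
  have hκ : 0 < κs := hκs ▸ setIntegral_Iic_pos hpos hint
  rw [hαstar, lt_div_iff₀ (by linarith)] at hᾱ
  have hᾱ1 : 0 < 1 - ᾱ := by nlinarith
  have hc : ᾱ / (1 - ᾱ) < κs := by rw [div_lt_iff₀ hᾱ1]; linarith
  refine (existsUnique_congr fun a => and_congr_right fun ha => ?_).2
    (existsUnique_intervalIntegral_eq hpos hint (div_pos hᾱ0 hᾱ1) (hκs ▸ hc))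
  rw [integral_const_mul, ← intervalIntegral.integral_of_le ha.le, div_mul_eq_mul_div,
    div_eq_one_iff_eq hᾱ0.ne', eq_div_iff hᾱ1.ne', mul_comm]

/-- existence and uniqueness of the constrained support
threshold `ŝ(x) < s*(x)` with
`∫_{ŝ(x)}^{s*(x)} ((1−ᾱ)/ᾱ) κ_x'(t) dt = 1`, when `0 < ᾱ < α*_x`. -/
theorem stmt_18 (f0 f1 : ℝ → ℝ)
    (hf0c : Continuous f0) (hf1c : Continuous f1)
    (hf0 : ∀ s, 0 < f0 s) (hf1 : ∀ s, 0 < f1 s)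
    (hm : StrictMono fun s => f1 s / f0 s)
    (x : ℝ) (hx : x ∈ Set.Ioo (0 : ℝ) (1 / 2))
    (sstar : ℝ) (hstar : f1 sstar / f0 sstar = x / (1 - x))
    (hint : IntegrableOn (fun t => (x * f0 t - (1 - x) * f1 t) / (1 - 2 * x))
      (Set.Iic sstar))
    (κs : ℝ) (hκs : κs = ∫ t in Set.Iic sstar,
      (x * f0 t - (1 - x) * f1 t) / (1 - 2 * x))
    (αstar ᾱ : ℝ) (hαstar : αstar = κs / (1 + κs))
    (hᾱ0 : 0 < ᾱ) (hᾱ : ᾱ < αstar) :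
    ∃! sh : ℝ, sh < sstar ∧
      (∫ t in Set.Ioc sh sstar,
        ((1 - ᾱ) / ᾱ) * ((x * f0 t - (1 - x) * f1 t) / (1 - 2 * x))) = 1 :=
  stmt_18_general f0 f1 hf0 hm x hx sstar hstar hint κs hκs αstar ᾱ hαstar hᾱ0 hᾱ
end

section
/- Posterior bound under source uncertainty: for any troll mass α ∈ [0,1) and any troll density g ≥ 0, the induced posterior π(s) lies strictly between min(π_B(s), 1/2) and max(π_B(s), 1/2) whenever g(s) > 0 and α > 0 and π_B(s) ≠ 1/2, where π_B(s) = f1(s)/(f0(s)+f1(s)) is the no-troll Bayesian posterior; i.e., the sender can only induce beliefs weakly closer to the prior than the exogenous information structure. -/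
/-- posterior bound under source uncertainty — with troll mass
`α > 0` and troll density value `g > 0`, the induced posterior lies strictly
between the Bayesian posterior `π_B = f1/(f0+f1)` and the prior `1/2`
(whenever `π_B ≠ 1/2`). -/
theorem stmt_19 (f0 f1 g α : ℝ)
    (hf0 : 0 < f0) (hf1 : 0 < f1) (hg : 0 < g)
    (hα0 : 0 < α) (hα1 : α < 1)
    (hB : f1 / (f0 + f1) ≠ 1 / 2) :
    min (f1 / (f0 + f1)) (1 / 2) <
        ((1 - α) * f1 + α * g) / ((1 - α) * (f0 + f1) + 2 * (α * g)) ∧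
      ((1 - α) * f1 + α * g) / ((1 - α) * (f0 + f1) + 2 * (α * g)) <
        max (f1 / (f0 + f1)) (1 / 2) := by
  have hS : 0 < f0 + f1 := by linarith
  have hD : 0 < (1 - α) * (f0 + f1) + 2 * (α * g) := by nlinarith
  have h2 : (0:ℝ) < 2 := by norm_num
  have hne : f1 ≠ f0 := by
    intro h
    apply hB
    rw [h, div_eq_div_iff (by linarith) (by norm_num)]
    ring
  rcases lt_or_gt_of_ne hne with h | h
  · have hBlt : f1 / (f0 + f1) < 1 / 2 := by
      rw [div_lt_div_iff₀ hS h2]; linarith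
    rw [min_eq_left hBlt.le, max_eq_right hBlt.le]
    constructor
    · rw [div_lt_div_iff₀ hS hD]; nlinarith [mul_pos (mul_pos hα0 hg) (sub_pos.mpr h)]
    · rw [div_lt_div_iff₀ hD h2]; nlinarith
  · have hBgt : (1:ℝ) / 2 < f1 / (f0 + f1) := by
      rw [div_lt_div_iff₀ h2 hS]; linarith
    rw [min_eq_right hBgt.le, max_eq_left hBgt.le]
    constructor
    · rw [div_lt_div_iff₀ h2 hD]; nlinarith
    · rw [div_lt_div_iff₀ hD hS]; nlinarith [mul_pos (mul_pos hα0 hg) (sub_pos.mpr h)]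
end
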